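/- arXiv:1410.6432 — 4 statements merged into one kernel-verified Lean document; each statement's English description precedes it below -/
import Mathlib

section
/- Let Δ be an odd linear operator on a graded commutative algebra V, and define the derived brackets l_n(a_1,…,a_n) := [[…[Δ, L_{a_1}],…], L_{a_n}](1). Then for all a_1,…,a_{n+1} ∈ V: l_{n+1}(a_1,…,a_n, a_{n+1}) = l_n(a_1,…,a_{n-1}, a_n·a_{n+1}) − (-1)^{(1+|a_1|+…+|a_{n-1}|)|a_n|} a_n · l_n(a_1,…,a_{n-1}, a_{n+1}) − (-1)^{(1+|a_1|+…+|a_n|)|a_{n+1}|} a_{n+1} · l_n(a_1,…,a_n). That is, l_{n+1} measures the deviation of l_n from being a derivation in its last argument. -/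
open scoped Classical

namespace BVPaper

variable {k : Type*} [Field k] [CharZero k]
variable {A : Type*} [Ring A] [Algebra k A]

/-- Left multiplication operator `L_a(b) = a*b`. -/
noncomputable def L (a : A) : A →ₗ[k] A := LinearMap.mulLeft k a

/-- Graded commutator of operators of degrees `p` and `q`:
`[P,Q] = P∘Q - (-1)^{pq} Q∘P`. -/
noncomputable def gcomm (p q : ℤ) (P Q : A →ₗ[k] A) : A →ₗ[k] A :=
  P ∘ₗ Q - (((p * q).negOnePow : ℤˣ) : ℤ) • (Q ∘ₗ P)

/-- Graded commutativity of a grading `𝒜` on `A` (Koszul rule). -/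
def GradedComm (𝒜 : ℤ → Submodule k A) : Prop :=
  ∀ (i j : ℤ) (a b : A), a ∈ 𝒜 i → b ∈ 𝒜 j →
    a * b = (((i * j).negOnePow : ℤˣ) : ℤ) • (b * a)

/-- `D` is a homogeneous operator of degree `d`. -/
def IsHomog (𝒜 : ℤ → Submodule k A) (d : ℤ) (D : A →ₗ[k] A) : Prop :=
  ∀ (i : ℤ) (a : A), a ∈ 𝒜 i → D a ∈ 𝒜 (i + d)

/-- `D`, of degree `d`, is a differential operator of order `≤ n`:
all `(n+1)`-fold iterated graded commutators with left multiplications vanish. -/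
def IsDiffOp (𝒜 : ℤ → Submodule k A) : ℕ → ℤ → (A →ₗ[k] A) → Prop
  | 0, d, D => ∀ (i : ℤ) (a : A), a ∈ 𝒜 i → gcomm d i D (L a) = 0
  | n + 1, d, D => ∀ (i : ℤ) (a : A), a ∈ 𝒜 i → IsDiffOp 𝒜 n (d + i) (gcomm d i D (L a))

/-- Iterated graded commutator `[[…[Q, L_{a_1}],…], L_{a_m}]` where the list records
the degrees of the (homogeneous) elements `a_i`. -/
noncomputable def iterOp (Q : A →ₗ[k] A) (q : ℤ) : List (ℤ × A) → (A →ₗ[k] A)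
  | [] => Q
  | (i, a) :: t => iterOp (gcomm q i Q (L a)) (q + i) t

/-- The Koszul sign of a permutation `σ` acting on elements of degrees `d i`. -/
def koszulSign {n : ℕ} (d : Fin n → ℤ) (σ : Equiv.Perm (Fin n)) : ℤˣ :=
  ∏ p ∈ Finset.univ.filter (fun p : Fin n × Fin n => p.1 < p.2 ∧ σ p.2 < σ p.1),
    (d p.1 * d p.2).negOnePow

/-- An `(n, m-n)`-shuffle. -/
def IsShuffle (m n : ℕ) (σ : Equiv.Perm (Fin m)) : Prop :=
  (∀ i j : Fin m, i < j → (j : ℕ) < n → σ i < σ j) ∧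
  (∀ i j : Fin m, i < j → n ≤ (i : ℕ) → σ i < σ j)



lemma iterOp_append (Q : A →ₗ[k] A) (q : ℤ) (xs ys : List (ℤ × A)) :
    iterOp Q q (xs ++ ys)
      = iterOp (iterOp Q q xs) (q + (xs.map Prod.fst).sum) ys := by
  induction xs generalizing Q q with
  | nil => simp [iterOp]
  | cons h t ih =>
    obtain ⟨i, a⟩ := h
    simp [iterOp, ih, add_assoc]

lemma key_two (X : A →ₗ[k] A) (p i j : ℤ) (a b : A) :
    gcomm (p + i) j (gcomm p i X (L a)) (L (k := k) b) (1 : A)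
      = gcomm p (i + j) X (L (k := k) (a * b)) 1
        - (((p * i).negOnePow : ℤˣ) : ℤ) • (a * gcomm p j X (L (k := k) b) 1)
        - ((((p + i) * j).negOnePow : ℤˣ) : ℤ) • (b * gcomm p i X (L (k := k) a) 1) := by
  simp only [gcomm, L, LinearMap.sub_apply, LinearMap.comp_apply, LinearMap.smul_apply,
    LinearMap.mulLeft_apply, mul_one, map_sub, map_smul, mul_add, mul_sub,
    Int.negOnePow_add, Units.val_mul, mul_smul_comm, smul_sub, smul_smul, mul_assoc]
  module

theorem statement7 (𝒜 : ℤ → Submodule k A) (hcomm : GradedComm 𝒜)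
    (q : ℤ) (hq : Odd q) (Δ : A →ₗ[k] A) (hΔ : IsHomog 𝒜 q Δ)
    (xs : List (ℤ × A)) (hxs : ∀ p ∈ xs, p.2 ∈ 𝒜 p.1)
    (i j : ℤ) (a b : A) (ha : a ∈ 𝒜 i) (hb : b ∈ 𝒜 j) :
    iterOp Δ q (xs ++ [(i, a), (j, b)]) 1
      = iterOp Δ q (xs ++ [(i + j, a * b)]) 1
        - ((((q + (xs.map Prod.fst).sum) * i).negOnePow : ℤˣ) : ℤ) •
            (a * iterOp Δ q (xs ++ [(j, b)]) 1)
        - ((((q + (xs.map Prod.fst).sum + i) * j).negOnePow : ℤˣ) : ℤ) •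
            (b * iterOp Δ q (xs ++ [(i, a)]) 1) := by
  rw [iterOp_append Δ q xs [(i, a), (j, b)], iterOp_append Δ q xs [(i + j, a * b)],
    iterOp_append Δ q xs [(j, b)], iterOp_append Δ q xs [(i, a)]]
  simpa [iterOp] using key_two (iterOp Δ q xs) (q + (xs.map Prod.fst).sum) i j a b

end BVPaper
end

section
/- Let S(U) be the free graded commutative algebra on a graded vector space U and let Δ_n be a differential operator of order ≤ n on S(U) that vanishes on S^{<n}(U). Then Δ_n is uniquely determined by its restriction to S^n(U); that is, if two such operators agree on S^n(U), they agree on all of S(U). -/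
/-!
Uniqueness reduces to showing that `E = D - D'`, a differential operator of order `≤ n` that
vanishes on `S^{≤ n}(U)`, is zero; we induct on `n`. Because `E (u v) = [E, L_u] v ± u E v`, an
operator that kills `S^0(U)` and commutes (in the graded sense) with `L_u` for every generator
`u ∈ S^1(U)` kills every `S^m(U)`, by induction on `m`. For such `u` the commutator `[E, L_u]` has
order `≤ n - 1` and kills `S^{≤ n-1}(U)`, since `L_u` maps it into `S^{≤ n}(U)`; so it vanishes by
the induction hypothesis, and for `n = 0` by the definition of order `0`.
-/

open scoped Classical

namespace BVPaper

variable {k : Type*} [Field k] [CharZero k]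
variable {A : Type*} [Ring A] [Algebra k A]

section

omit [CharZero k]

lemma gcomm_apply (p q : ℤ) (P Q : A →ₗ[k] A) (x : A) :
    gcomm p q P Q x = P (Q x) - (((p * q).negOnePow : ℤˣ) : ℤ) • Q (P x) :=
  rfl

lemma gcomm_sub_left (p q : ℤ) (P P' Q : A →ₗ[k] A) :
    gcomm p q (P - P') Q = gcomm p q P Q - gcomm p q P' Q := by
  ext x
  simp only [gcomm_apply, LinearMap.sub_apply, map_sub, smul_sub]
  abel

lemma IsDiffOp.sub {𝒜 : ℤ → Submodule k A} {n : ℕ} {d : ℤ} {D D' : A →ₗ[k] A}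
    (hD : IsDiffOp 𝒜 n d D) (hD' : IsDiffOp 𝒜 n d D') : IsDiffOp 𝒜 n d (D - D') := by
  induction n generalizing d D D' with
  | zero =>
    intro i a ha
    rw [gcomm_sub_left, hD i a ha, hD' i a ha, sub_zero]
  | succ n ih =>
    intro i a ha
    rw [gcomm_sub_left]
    exact ih (hD i a ha) (hD' i a ha)

lemma apply_mul_eq_zero_of_gcomm_eq_zero {d i : ℤ} {E : A →ₗ[k] A} {u v : A}
    (hcomm : gcomm d i E (L u) = 0) (hv : E v = 0) : E (u * v) = 0 := by
  have h := LinearMap.congr_fun hcomm v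
  rwa [gcomm_apply, hv, map_zero, smul_zero, sub_zero] at h

lemma eq_zero_of_gcomm_eq_zero (𝒮 : ℕ → ℤ → Submodule k A)
    (htop : (⨆ (m : ℕ) (j : ℤ), 𝒮 m j) = ⊤)
    (hgen : ∀ (m : ℕ) (j : ℤ), 𝒮 (m + 1) j ≤ Submodule.span k
      {x : A | ∃ (i i' : ℤ) (u v : A), u ∈ 𝒮 1 i ∧ v ∈ 𝒮 m i' ∧ i + i' = j ∧ x = u * v})
    (d : ℤ) (E : A →ₗ[k] A) (hzero : ∀ j : ℤ, ∀ x ∈ 𝒮 0 j, E x = 0)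
    (hcomm : ∀ (i : ℤ) (u : A), u ∈ 𝒮 1 i → gcomm d i E (L u) = 0) : E = 0 := by
  have hker : ∀ (m : ℕ) (j : ℤ), 𝒮 m j ≤ LinearMap.ker E := by
    intro m
    induction m with
    | zero => exact fun j x hx => hzero j x hx
    | succ m ih =>
      intro j
      refine (hgen m j).trans (Submodule.span_le.mpr ?_)
      rintro _ ⟨i, i', u, v, hu, hv, -, rfl⟩
      exact apply_mul_eq_zero_of_gcomm_eq_zero (hcomm i u hu) (ih i' hv)
  rw [← LinearMap.ker_eq_top, eq_top_iff, ← htop]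
  exact iSup₂_le hker

lemma IsDiffOp.eq_zero_of_apply_eq_zero (𝒮 : ℕ → ℤ → Submodule k A)
    (hmul : ∀ (p q : ℕ) (i j : ℤ) (a b : A), a ∈ 𝒮 p i → b ∈ 𝒮 q j →
      a * b ∈ 𝒮 (p + q) (i + j))
    (htop : (⨆ (m : ℕ) (j : ℤ), 𝒮 m j) = ⊤)
    (hgen : ∀ (m : ℕ) (j : ℤ), 𝒮 (m + 1) j ≤ Submodule.span k
      {x : A | ∃ (i i' : ℤ) (u v : A), u ∈ 𝒮 1 i ∧ v ∈ 𝒮 m i' ∧ i + i' = j ∧ x = u * v})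
    {n : ℕ} {d : ℤ} {E : A →ₗ[k] A} (hE : IsDiffOp (fun j => ⨆ m : ℕ, 𝒮 m j) n d E)
    (hvan : ∀ m : ℕ, m ≤ n → ∀ j : ℤ, ∀ x ∈ 𝒮 m j, E x = 0) : E = 0 := by
  induction n generalizing d E with
  | zero =>
    refine eq_zero_of_gcomm_eq_zero 𝒮 htop hgen d E (hvan 0 le_rfl) fun i u hu => ?_
    exact hE i u (Submodule.mem_iSup_of_mem 1 hu)
  | succ n ih =>
    refine eq_zero_of_gcomm_eq_zero 𝒮 htop hgen d E (hvan 0 n.succ.zero_le) fun i u hu => ?_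
    have hcomm_van : ∀ m : ℕ, m ≤ n → ∀ j : ℤ, ∀ x ∈ 𝒮 m j, gcomm d i E (L u) x = 0 := by
      intro m hm j x hx
      rw [gcomm_apply, L, LinearMap.mulLeft_apply, LinearMap.mulLeft_apply,
        hvan (1 + m) (by omega) _ _ (hmul 1 m i j u x hu hx), hvan m (by omega) j x hx,
        mul_zero, smul_zero, sub_zero]
    exact ih (hE i u (Submodule.mem_iSup_of_mem 1 hu)) hcomm_van

end

theorem statement14_general (𝒮 : ℕ → ℤ → Submodule k A)
    (hmul : ∀ (p q : ℕ) (i j : ℤ) (a b : A), a ∈ 𝒮 p i → b ∈ 𝒮 q j →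
      a * b ∈ 𝒮 (p + q) (i + j))
    (htop : (⨆ (m : ℕ) (j : ℤ), 𝒮 m j) = ⊤)
    (hgen : ∀ (m : ℕ) (j : ℤ), 𝒮 (m + 1) j ≤ Submodule.span k
      {x : A | ∃ (i i' : ℤ) (u v : A), u ∈ 𝒮 1 i ∧ v ∈ 𝒮 m i' ∧ i + i' = j ∧ x = u * v})
    (n : ℕ) (d : ℤ) (D D' : A →ₗ[k] A)
    (hD : IsDiffOp (fun j => ⨆ m : ℕ, 𝒮 m j) n d D)
    (hD' : IsDiffOp (fun j => ⨆ m : ℕ, 𝒮 m j) n d D')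
    (hvan : ∀ m : ℕ, m < n → ∀ j : ℤ, ∀ x ∈ 𝒮 m j, D x = 0)
    (hvan' : ∀ m : ℕ, m < n → ∀ j : ℤ, ∀ x ∈ 𝒮 m j, D' x = 0)
    (hagree : ∀ j : ℤ, ∀ x ∈ 𝒮 n j, D x = D' x) :
    D = D' := by
  refine sub_eq_zero.mp (IsDiffOp.eq_zero_of_apply_eq_zero 𝒮 hmul htop hgen (hD.sub hD') fun m hm j x hx => ?_)
  rw [LinearMap.sub_apply, sub_eq_zero]
  rcases hm.lt_or_eq with hlt | rfl
  · rw [hvan m hlt j x hx, hvan' m hlt j x hx]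
  · exact hagree j x hx

theorem statement14 (𝒮 : ℕ → ℤ → Submodule k A)
    (hcomm : GradedComm (fun j => ⨆ m : ℕ, 𝒮 m j))
    (hone : (1 : A) ∈ 𝒮 0 0)
    (hmul : ∀ (p q : ℕ) (i j : ℤ) (a b : A), a ∈ 𝒮 p i → b ∈ 𝒮 q j →
      a * b ∈ 𝒮 (p + q) (i + j))
    (htop : (⨆ (m : ℕ) (j : ℤ), 𝒮 m j) = ⊤)
    (hgen : ∀ (m : ℕ) (j : ℤ), 𝒮 (m + 1) j ≤ Submodule.span k
      {x : A | ∃ (i i' : ℤ) (u v : A), u ∈ 𝒮 1 i ∧ v ∈ 𝒮 m i' ∧ i + i' = j ∧ x = u * v})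
    (n : ℕ) (d : ℤ) (D D' : A →ₗ[k] A)
    (hD : IsDiffOp (fun j => ⨆ m : ℕ, 𝒮 m j) n d D)
    (hD' : IsDiffOp (fun j => ⨆ m : ℕ, 𝒮 m j) n d D')
    (hvan : ∀ m : ℕ, m < n → ∀ j : ℤ, ∀ x ∈ 𝒮 m j, D x = 0)
    (hvan' : ∀ m : ℕ, m < n → ∀ j : ℤ, ∀ x ∈ 𝒮 m j, D' x = 0)
    (hagree : ∀ j : ℤ, ∀ x ∈ 𝒮 n j, D x = D' x) :
    D = D' :=
  statement14_general 𝒮 hmul htop hgen n d D D' hD hD' hvan hvan' hagree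

end BVPaper
end

section
/- Let (S(U), Δ) be a pure BV∞-algebra: Δ = Σ_{n≥1} ħ^{n−1} Δ_n with each Δ_n a differential operator of order ≤ n mapping S^n(U) into U and S^{<n}(U) to 0, Δ² = 0, Δ(1) = 0. Then the derived brackets l_n(a_1,…,a_n) := [[…[Δ_n, L_{a_1}],…], L_{a_n}](1), restricted to a_1,…,a_n ∈ U, take values in U and satisfy l_n(a_1,…,a_n) = Δ_n(a_1⋯a_n); consequently U[1] is closed under the brackets l_n and is an L∞-subalgebra of S(U)[1]. -/
open scoped Classical

namespace BVPaper

variable {k : Type*} [Field k] [CharZero k]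
variable {A : Type*} [Ring A] [Algebra k A]

/-!
If `Q` kills every product of fewer than `m` elements of `U`, then `[Q, L_a]` acts on a product `y`
of at most `m - 1` of them as `y ↦ Q (a * y) ∓ a * Q y = Q (a * y)`, so it kills the products of
fewer than `m - 1`. Peeling off one `L_{a_i}` at a time, the derived bracket
`[…[Δ_n, L_{a_1}],…, L_{a_n}](1)` therefore collapses to `Δ_n (a_1 ⋯ a_n)`, which lies in `U`
by purity.
-/

section

variable {k : Type*} [Field k] {A : Type*} [Ring A] [Algebra k A]

lemma gcomm_L_apply_of_apply_eq_zero (p q : ℤ) (Q : A →ₗ[k] A) (a : A) {x : A}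
    (hx : Q x = 0) : gcomm p q Q (L a) x = Q (a * x) := by
  simp [gcomm, L, hx]

variable {𝒮 : ℕ → ℤ → Submodule k A}

lemma prod_map_snd_mem (hone : (1 : A) ∈ 𝒮 0 0)
    (hmul : ∀ (p q : ℕ) (i j : ℤ) (a b : A), a ∈ 𝒮 p i → b ∈ 𝒮 q j →
      a * b ∈ 𝒮 (p + q) (i + j))
    {l : List (ℤ × A)} (hl : ∀ p ∈ l, p.2 ∈ 𝒮 1 p.1) :
    (l.map Prod.snd).prod ∈ 𝒮 l.length (l.map Prod.fst).sum := by
  induction l with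
  | nil => simpa using hone
  | cons a t ih =>
    rw [List.forall_mem_cons] at hl
    simpa [Nat.add_comm] using hmul _ _ _ _ _ _ hl.1 (ih hl.2)

lemma iterOp_apply_one (hone : (1 : A) ∈ 𝒮 0 0)
    (hmul : ∀ (p q : ℕ) (i j : ℤ) (a b : A), a ∈ 𝒮 p i → b ∈ 𝒮 q j →
      a * b ∈ 𝒮 (p + q) (i + j))
    {l : List (ℤ × A)} (hl : ∀ p ∈ l, p.2 ∈ 𝒮 1 p.1) (Q : A →ₗ[k] A) (q : ℤ)
    (hQ : ∀ m < l.length, ∀ (j : ℤ), ∀ x ∈ 𝒮 m j, Q x = 0) :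
    iterOp Q q l 1 = Q (l.map Prod.snd).prod := by
  induction l generalizing Q q with
  | nil => rfl
  | cons b t ih =>
    obtain ⟨i, a⟩ := b
    rw [List.forall_mem_cons] at hl
    have ha : a ∈ 𝒮 1 i := hl.1
    have hQ' : ∀ m < t.length, ∀ (j : ℤ), ∀ x ∈ 𝒮 m j, gcomm q i Q (L a) x = 0 := by
      intro m hm j x hx
      rw [gcomm_L_apply_of_apply_eq_zero q i Q a (hQ m (by simp; omega) j x hx)]
      exact hQ (1 + m) (by simp; omega) _ _ (hmul _ _ _ _ _ _ ha hx)
    have hQt : Q (t.map Prod.snd).prod = 0 :=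
      hQ t.length (by simp) _ _ (prod_map_snd_mem hone hmul hl.2)
    rw [iterOp, ih hl.2 _ _ hQ', gcomm_L_apply_of_apply_eq_zero q i Q a hQt]
    rfl

end

theorem statement15_general (𝒮 : ℕ → ℤ → Submodule k A)
    (hone : (1 : A) ∈ 𝒮 0 0)
    (hmul : ∀ (p q : ℕ) (i j : ℤ) (a b : A), a ∈ 𝒮 p i → b ∈ 𝒮 q j →
      a * b ∈ 𝒮 (p + q) (i + j))
    (Δop : ℕ → (A →ₗ[k] A))
    (hpure1 : ∀ n : ℕ, 1 ≤ n → ∀ j : ℤ, ∀ x ∈ 𝒮 n j,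
      Δop n x ∈ 𝒮 1 (j + (3 - 2 * (n : ℤ))))
    (hpure0 : ∀ (n m : ℕ), m < n → ∀ j : ℤ, ∀ x ∈ 𝒮 m j, Δop n x = 0)
    (n : ℕ) (hn : 1 ≤ n) (deg : Fin n → ℤ) (x : Fin n → A)
    (hx : ∀ i, x i ∈ 𝒮 1 (deg i)) :
    iterOp (Δop n) (3 - 2 * (n : ℤ)) (List.ofFn fun i => (deg i, x i)) 1
        = Δop n ((List.ofFn x).prod)
      ∧ Δop n ((List.ofFn x).prod) ∈ 𝒮 1 ((∑ i, deg i) + (3 - 2 * (n : ℤ))) := by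
  set l : List (ℤ × A) := List.ofFn fun i => (deg i, x i)
  have hl : ∀ p ∈ l, p.2 ∈ 𝒮 1 p.1 := by
    simpa [l, List.forall_mem_ofFn_iff] using hx
  have hlen : l.length = n := List.length_ofFn
  have hsnd : l.map Prod.snd = List.ofFn x := by simp [l, List.map_ofFn, Function.comp_def]
  have hfst : (l.map Prod.fst).sum = ∑ i, deg i := by
    simp [l, List.map_ofFn, List.sum_ofFn, Function.comp_def]
  have hprod : (List.ofFn x).prod ∈ 𝒮 n (∑ i, deg i) := by
    simpa only [hsnd, hlen, hfst] using prod_map_snd_mem hone hmul hl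
  refine ⟨?_, hpure1 n hn _ _ hprod⟩
  rw [iterOp_apply_one hone hmul hl _ _ (hlen ▸ hpure0 n), hsnd]

theorem statement15 (𝒮 : ℕ → ℤ → Submodule k A)
    (hcomm : GradedComm (fun j => ⨆ m : ℕ, 𝒮 m j))
    (hone : (1 : A) ∈ 𝒮 0 0)
    (hmul : ∀ (p q : ℕ) (i j : ℤ) (a b : A), a ∈ 𝒮 p i → b ∈ 𝒮 q j →
      a * b ∈ 𝒮 (p + q) (i + j))
    (Δop : ℕ → (A →ₗ[k] A)) (h0 : Δop 0 = 0)
    (hdiff : ∀ n : ℕ, 1 ≤ n →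
      IsDiffOp (fun j => ⨆ m : ℕ, 𝒮 m j) n (3 - 2 * (n : ℤ)) (Δop n))
    (hpure1 : ∀ n : ℕ, 1 ≤ n → ∀ j : ℤ, ∀ x ∈ 𝒮 n j,
      Δop n x ∈ 𝒮 1 (j + (3 - 2 * (n : ℤ))))
    (hpure0 : ∀ (n m : ℕ), m < n → ∀ j : ℤ, ∀ x ∈ 𝒮 m j, Δop n x = 0)
    (hsq : ∀ N : ℕ, ∑ i ∈ Finset.range (N + 1), (Δop i ∘ₗ Δop (N - i)) = 0)
    (n : ℕ) (hn : 1 ≤ n) (deg : Fin n → ℤ) (x : Fin n → A)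
    (hx : ∀ i, x i ∈ 𝒮 1 (deg i)) :
    iterOp (Δop n) (3 - 2 * (n : ℤ)) (List.ofFn fun i => (deg i, x i)) 1
        = Δop n ((List.ofFn x).prod)
      ∧ Δop n ((List.ofFn x).prod) ∈ 𝒮 1 ((∑ i, deg i) + (3 - 2 * (n : ℤ))) :=
  statement15_general 𝒮 hone hmul Δop hpure1 hpure0 n hn deg x hx

end BVPaper
end

section
/- Let φ : S(U) → V'[[ħ]] be a degree-zero linear map with φ(1) = 0, where V' is a graded commutative algebra, and let exp(φ) : S(U)[[ħ]] → V'[[ħ]] be its exponential. If S ∈ λ·U[[ħ]]⁰[[λ]] (a degree-zero formal power series in λ with zero constant term, with values in U[[ħ]]), then exp(φ)(e^S) = e^{φ(e^S)}, where e^S = Σ_{n≥0} S^n/n! in S(U)[[ħ]][[λ]] and both sides are extended by λ-linearity and continuity. -/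
open scoped Classical

namespace BVPaper

variable {k : Type*} [Field k] [CharZero k]
variable {A : Type*} [Ring A] [Algebra k A]

/-!
Write `e^S = Σ_N λ^N expCoeff S N`, where the `λ^N`-coefficient is a sum over compositions
`a` of `N`, weighted by `1 / ℓ(a)!`. Feeding the word `S_{a₁} ⋯ S_{aₗ}` to the formula for
`exp(φ)` produces a sum over permutations `σ` and compositions `b` of `ℓ(a)`; since permuting the
parts of a composition of `N` is a bijection, the sum over `σ` only cancels the weight `1 / ℓ(a)!`.
What is left is a sum over pairs `(a, b)`, i.e. over compositions of `N` whose blocks are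
themselves split into compositions, which is exactly the expansion of `e^{φ(e^S)}` after
exchanging the two levels (`Composition.sigmaEquivSigmaPi`).
-/

section Tuples

open Finset

variable {M : Type*} [AddCommMonoid M] {N : ℕ}

def _root_.Finset.Nat.posAntidiagonalTuple (m N : ℕ) : Finset (Fin m → ℕ) :=
  {f ∈ Finset.Nat.antidiagonalTuple m N | ∀ i, 0 < f i}

lemma _root_.Finset.Nat.mem_posAntidiagonalTuple {m : ℕ} {f : Fin m → ℕ} :
    f ∈ Nat.posAntidiagonalTuple m N ↔ ∑ i, f i = N ∧ ∀ i, 0 < f i := by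
  simp [Nat.posAntidiagonalTuple, Nat.mem_antidiagonalTuple]

lemma _root_.Finset.Nat.comp_perm_mem_posAntidiagonalTuple {m : ℕ} (σ : Equiv.Perm (Fin m))
    {f : Fin m → ℕ} (hf : f ∈ Nat.posAntidiagonalTuple m N) :
    f ∘ σ ∈ Nat.posAntidiagonalTuple m N := by
  rw [Nat.mem_posAntidiagonalTuple] at hf ⊢
  exact ⟨(Equiv.sum_comp σ f).trans hf.1, fun i => hf.2 (σ i)⟩

lemma _root_.Finset.Nat.sum_posAntidiagonalTuple_comp_perm {m : ℕ} (σ : Equiv.Perm (Fin m))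
    (H : (Fin m → ℕ) → M) :
    ∑ f ∈ Nat.posAntidiagonalTuple m N, H (f ∘ σ) = ∑ f ∈ Nat.posAntidiagonalTuple m N, H f := by
  refine sum_nbij' (· ∘ σ) (· ∘ σ.symm)
    (fun f hf => Nat.comp_perm_mem_posAntidiagonalTuple σ hf)
    (fun f hf => Nat.comp_perm_mem_posAntidiagonalTuple σ.symm hf) (fun f _ => ?_) (fun f _ => ?_)
    fun _ _ => rfl
  · simp [Function.comp_assoc]
  · simp [Function.comp_assoc]

lemma _root_.Composition.sum_eq_sum_posAntidiagonalTuple (G : (m : ℕ) → (Fin m → ℕ) → M) :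
    ∑ c : Composition N, G c.length c.blocksFun
      = ∑ m ∈ range (N + 1), ∑ f ∈ Nat.posAntidiagonalTuple m N, G m f := by
  rw [sum_sigma']
  refine sum_bij' (fun c _ => ⟨c.length, c.blocksFun⟩)
    (fun p hp => ⟨List.ofFn p.2, ?_, ?_⟩) ?_ (fun _ _ => mem_univ _) ?_ ?_ fun _ _ => rfl
  · intro b hb
    obtain ⟨i, rfl⟩ := List.mem_ofFn.1 hb
    exact (Nat.mem_posAntidiagonalTuple.1 (mem_sigma.1 hp).2).2 i
  · rw [List.sum_ofFn]
    exact (Nat.mem_posAntidiagonalTuple.1 (mem_sigma.1 hp).2).1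
  · intro c _
    simp only [mem_sigma, mem_range, Nat.mem_posAntidiagonalTuple]
    exact ⟨Nat.lt_succ_of_le c.length_le, c.sum_blocksFun, c.one_le_blocksFun⟩
  · exact fun c _ => Composition.ext c.ofFn_blocksFun
  · exact fun p _ => List.equivSigmaTuple.apply_symm_apply p

lemma _root_.Composition.sum_sum_perm_blocksFun (G : (m : ℕ) → (Fin m → ℕ) → M) :
    ∑ c : Composition N, ∑ σ : Equiv.Perm (Fin c.length), G c.length (c.blocksFun ∘ σ)
      = ∑ c : Composition N, c.length.factorial • G c.length c.blocksFun := by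
  rw [Composition.sum_eq_sum_posAntidiagonalTuple fun m f => ∑ σ : Equiv.Perm (Fin m), G m (f ∘ σ),
    Composition.sum_eq_sum_posAntidiagonalTuple fun m f => m.factorial • G m f]
  refine sum_congr rfl fun m _ => ?_
  rw [sum_comm]
  simp only [Nat.sum_posAntidiagonalTuple_comp_perm, sum_const, card_univ, Fintype.card_perm,
    Fintype.card_fin, smul_sum]

end Tuples

lemma _root_.List.prod_map_smul {ι R B : Type*} [CommMonoid R] [Monoid B] [MulAction R B]
    [IsScalarTower R B B] [SMulCommClass R B B] (l : List ι) (c : ι → R) (f : ι → B) :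
    (l.map fun i => c i • f i).prod = (l.map c).prod • (l.map f).prod := by
  induction l with
  | nil => simp
  | cons i l ih => simp only [List.map_cons, List.prod_cons, ih, smul_mul_smul_comm]

lemma _root_.List.prod_ofFn_sum {n : ℕ} {κ : Fin n → Type*} [∀ i, Fintype (κ i)] {B : Type*}
    [Semiring B] (g : ∀ i, κ i → B) :
    (List.ofFn fun i => ∑ j, g i j).prod
      = ∑ r : ∀ i, κ i, (List.ofFn fun i => g i (r i)).prod := by
  simpa only [MultilinearMap.mkPiAlgebraFin_apply] using
    (MultilinearMap.mkPiAlgebraFin ℕ n B).map_sum g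

lemma _root_.List.map_splitWrtComposition {α β : Type*} {n : ℕ} (f : α → β) (l : List α)
    (c : Composition n) :
    (l.map f).splitWrtComposition c = (l.splitWrtComposition c).map (List.map f) := by
  unfold List.splitWrtComposition
  induction c.blocks generalizing l with
  | nil => rfl
  | cons m ns ih =>
    simp only [List.splitWrtCompositionAux_cons, List.map_cons, ← List.map_drop, ih, List.map_take]

lemma _root_.Composition.ofFn_sigmaCompositionAux {X : Type*} {N : ℕ} (F : List ℕ → X)
    (a : Composition N) (b : Composition a.length) :
    List.ofFn (fun i => F (a.sigmaCompositionAux b i).blocks)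
      = (a.blocks.splitWrtComposition b).map F := by
  apply List.ext_getElem (by simp [Composition.length_gather])
  intro i _ _
  simp [Composition.sigmaCompositionAux]

section ExpCoeff

variable (K : Type*) [Semifield K] {R : Type*} [Semiring R] [Algebra K R]

/-- The coefficient of `λ^N` in `exp (Σ_{p ≥ 1} T p λ^p)`. -/
def expCoeff (T : ℕ → R) (N : ℕ) : R :=
  ∑ c : Composition N, ((c.length.factorial : ℕ) : K)⁻¹ • (c.blocks.map T).prod

lemma expCoeff_sum_composition (F : List ℕ → R) (N : ℕ) :
    expCoeff K (fun n => ∑ c : Composition n, F c.blocks) N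
      = ∑ a : Composition N, ∑ b : Composition a.length,
          ((b.length.factorial : ℕ) : K)⁻¹ • ((a.blocks.splitWrtComposition b).map F).prod := by
  have expand : ∀ c : Composition N,
      (c.blocks.map fun n => ∑ d : Composition n, F d.blocks).prod
        = ∑ d : ∀ i, Composition (c.blocksFun i), (List.ofFn fun i => F (d i).blocks).prod := by
    intro c
    rw [← c.ofFn_blocksFun, List.map_ofFn]
    exact List.prod_ofFn_sum fun i (d : Composition (c.blocksFun i)) => F d.blocks
  simp only [expCoeff, expand, Finset.smul_sum]
  rw [Finset.sum_sigma', Finset.sum_sigma', Finset.univ_sigma_univ, Finset.univ_sigma_univ,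
    ← (Composition.sigmaEquivSigmaPi N).sum_comp]
  refine Finset.sum_congr rfl fun ⟨a, b⟩ _ => ?_
  simp only [Composition.sigmaEquivSigmaPi, Equiv.coe_fn_mk, Composition.length_gather,
    Composition.ofFn_sigmaCompositionAux]

lemma smul_prod_map_splitWrtComposition {α B : Type*} [Semiring B] [Algebra K B] (g : List α → B)
    (L : List α) (b : Composition L.length) :
    (((b.length.factorial * (b.blocks.map Nat.factorial).prod : ℕ) : K))⁻¹ •
        ((L.splitWrtComposition b).map g).prod
      = ((b.length.factorial : ℕ) : K)⁻¹ •
        ((L.splitWrtComposition b).map fun l => ((l.length.factorial : ℕ) : K)⁻¹ • g l).prod := by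
  rw [List.prod_map_smul, smul_smul, Nat.cast_mul, mul_inv]
  congr 2
  have : (L.splitWrtComposition b).map (fun l => ((l.length.factorial : ℕ) : K)⁻¹)
      = ((L.splitWrtComposition b).map List.length).map fun n => ((n.factorial : ℕ) : K)⁻¹ := by
    rw [List.map_map]; rfl
  rw [this, List.map_length_splitWrtComposition, Nat.cast_list_prod, List.prod_inv, List.map_map,
    List.map_map]
  rfl

end ExpCoeff

section IsExpOn

variable {K : Type*} [Field K] {R B : Type*} [Ring R] [Algebra K R] [Ring B] [Algebra K B]

/-- `Φ = exp(φ)` on words in `W`: a composition `c` of `m` is the tuple `(i_1, …, i_k)`. -/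
def IsExpOn (W : Submodule K R) (φ Φ : R →ₗ[K] B) : Prop :=
  ∀ (m : ℕ) (x : Fin m → R), (∀ i, x i ∈ W) →
    Φ ((List.ofFn x).prod)
      = ∑ c : Composition m, ∑ σ : Equiv.Perm (Fin m),
          ((((c.length).factorial * (c.blocks.map Nat.factorial).prod : ℕ) : K))⁻¹ •
            (((List.ofFn fun i => x (σ i)).splitWrtComposition c).map (fun blk => φ blk.prod)).prod

lemma IsExpOn.map_expCoeff [CharZero K] {W : Submodule K R} {φ Φ : R →ₗ[K] B}
    (hΦ : IsExpOn W φ Φ) {S : ℕ → R} (hS : ∀ p, S p ∈ W) (N : ℕ) :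
    Φ (expCoeff K S N)
      = ∑ a : Composition N, ∑ b : Composition a.length, ((b.length.factorial : ℕ) : K)⁻¹ •
          ((a.blocks.splitWrtComposition b).map
            fun l => ((l.length.factorial : ℕ) : K)⁻¹ • φ ((l.map S).prod)).prod := by
  set G : (m : ℕ) → (Fin m → ℕ) → B := fun m f => ∑ b : Composition m,
    ((m.factorial : ℕ) : K)⁻¹ •
      (((b.length.factorial * (b.blocks.map Nat.factorial).prod : ℕ) : K))⁻¹ •
        (((List.ofFn fun i => S (f i)).splitWrtComposition b).map (fun blk => φ blk.prod)).prod
  have word : ∀ a : Composition N, a.blocks.map S = List.ofFn fun i => S (a.blocksFun i) := by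
    intro a
    rw [← a.ofFn_blocksFun, List.map_ofFn]
    rfl
  have symmetrize : Φ (expCoeff K S N)
      = ∑ a : Composition N, ∑ σ : Equiv.Perm (Fin a.length), G a.length (a.blocksFun ∘ σ) := by
    simp only [expCoeff, map_sum, map_smul]
    refine Finset.sum_congr rfl fun a _ => ?_
    rw [word, hΦ _ _ fun i => hS _, Finset.smul_sum, Finset.sum_comm]
    simp only [Finset.smul_sum]
    rfl
  rw [symmetrize, Composition.sum_sum_perm_blocksFun]
  refine Finset.sum_congr rfl fun a _ => ?_
  simp only [G, Finset.smul_sum]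
  refine Finset.sum_congr rfl fun b _ => ?_
  rw [← Nat.cast_smul_eq_nsmul K, smul_smul,
    mul_inv_cancel₀ (Nat.cast_ne_zero.2 (Nat.factorial_ne_zero _)), one_smul, ← word,
    List.map_splitWrtComposition, List.map_map]
  exact smul_prod_map_splitWrtComposition K _ a.blocks b

end IsExpOn

theorem statement18_general {B : Type*} [Ring B] [Algebra k B] (W : Submodule k A) (φ Φ : A →ₗ[k] B)
    (hΦ : ∀ (m : ℕ) (x : Fin m → A), (∀ i, x i ∈ W) →
      Φ ((List.ofFn x).prod)
        = ∑ c : Composition m, ∑ σ : Equiv.Perm (Fin m),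
            ((((c.length).factorial * (c.blocks.map Nat.factorial).prod : ℕ) : k))⁻¹ •
              (((List.ofFn fun i => x (σ i)).splitWrtComposition c).map
                (fun blk => φ blk.prod)).prod)
    (S : ℕ → A) (hSW : ∀ p : ℕ, S p ∈ W) :
    ∀ N : ℕ,
      Φ (∑ c : Composition N, (((c.length).factorial : ℕ) : k)⁻¹ • (c.blocks.map S).prod)
        = ∑ c : Composition N, (((c.length).factorial : ℕ) : k)⁻¹ •
            ((c.blocks.map fun b =>
                φ (∑ c' : Composition b,
                    (((c'.length).factorial : ℕ) : k)⁻¹ • (c'.blocks.map S).prod)).prod) := by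
  intro N
  have inner : ∀ n, φ (expCoeff k S n) = ∑ c : Composition n,
      ((c.blocks.length.factorial : ℕ) : k)⁻¹ • φ ((c.blocks.map S).prod) := by
    simp [expCoeff, map_sum, map_smul]
  change Φ (expCoeff k S N) = expCoeff k (fun n => φ (expCoeff k S n)) N
  rw [IsExpOn.map_expCoeff hΦ hSW, funext inner,
    expCoeff_sum_composition k fun l => ((l.length.factorial : ℕ) : k)⁻¹ • φ ((l.map S).prod)]

theorem statement18 (𝒜 : ℤ → Submodule k A) (hcomm : GradedComm 𝒜)
    (hone : (1 : A) ∈ 𝒜 0)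
    {B : Type*} [Ring B] [Algebra k B]
    (W : Submodule k A) (hW : W ≤ 𝒜 0)
    (φ Φ : A →ₗ[k] B) (hφ1 : φ 1 = 0)
    (hΦ : ∀ (m : ℕ) (x : Fin m → A), (∀ i, x i ∈ W) →
      Φ ((List.ofFn x).prod)
        = ∑ c : Composition m, ∑ σ : Equiv.Perm (Fin m),
            ((((c.length).factorial * (c.blocks.map Nat.factorial).prod : ℕ) : k))⁻¹ •
              (((List.ofFn fun i => x (σ i)).splitWrtComposition c).map
                (fun blk => φ blk.prod)).prod)
    (S : ℕ → A) (hS0 : S 0 = 0) (hSW : ∀ p : ℕ, S p ∈ W) :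
    ∀ N : ℕ,
      Φ (∑ c : Composition N, (((c.length).factorial : ℕ) : k)⁻¹ • (c.blocks.map S).prod)
        = ∑ c : Composition N, (((c.length).factorial : ℕ) : k)⁻¹ •
            ((c.blocks.map fun b =>
                φ (∑ c' : Composition b,
                    (((c'.length).factorial : ℕ) : k)⁻¹ • (c'.blocks.map S).prod)).prod) :=
  statement18_general W φ Φ hΦ S hSW

end BVPaper
end
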